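/- arXiv:2002.08738 — 2 statements merged into one kernel-verified Lean document; each statement's English description precedes it below -/
import Mathlib

section
/- Let (C, R, 𝓡) be a big-step semantics satisfying the boundedness condition BP and 𝓡^? its partial-evaluation semantics. For each sequence (τ_n)_{n∈ℕ} of finite proof trees in 𝓡^? that is strictly increasing with respect to the order ⊑, the least upper bound ⊔ τ_n is an infinite, well-formed proof tree. -/
namespace BigStepMeta

universe u

/-- A judgment `c ⇒ r`: a configuration together with a result. -/
structure Judg (C : Type u) where
  conf : C
  res  : C

/-- A big-step rule: a conclusion configuration plus a nonempty finite list of premises.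
The last premise is the continuation; the conclusion judgment is `concl ⇒ (last premise).res`. -/
structure Rule (C : Type u) where
  concl : C
  premises : List (Judg C)
  ne : premises ≠ []

/-- The last premise (continuation) of a rule. -/
def Rule.lastJ {C : Type u} (ρ : Rule C) : Judg C := ρ.premises.getLast ρ.ne

/-- A big-step semantics `(C, R, 𝓡)`: configurations `C`, results `R ⊆ C`, rules `𝓡`. -/
structure BigStep (C : Type u) where
  R : Set C
  Rules : Set (Rule C)
  concl_not_res : ∀ ρ ∈ Rules, ρ.concl ∉ R
  prem_res : ∀ ρ ∈ Rules, ∀ j ∈ ρ.premises, j.res ∈ R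

variable {C : Type u}

/-- Condition BP: the number of premises of rules is bounded. -/
def BigStep.BP (S : BigStep C) : Prop :=
  ∃ b : ℕ, ∀ ρ ∈ S.Rules, ρ.premises.length ≤ b

/-- Inductive derivability `⊢_𝓡 c ⇒ r`: there is a finite proof tree.
For each result `r ∈ R` there is an implicit axiom `r ⇒ r`. -/
inductive Derives (S : BigStep C) : C → C → Prop
  | ax {r : C} : r ∈ S.R → Derives S r r
  | rule {ρ : Rule C} : ρ ∈ S.Rules →
      (∀ j ∈ ρ.premises, Derives S j.conf j.res) →
      Derives S ρ.concl ρ.lastJ.res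

/-! ## Traces -/

/-- A finite or infinite trace of configurations. -/
inductive Trace (C : Type u) where
  | fin : List C → Trace C
  | inf : (ℕ → C) → Trace C

/-- Concatenation of a finite list with an infinite sequence. -/
def appendInf (l : List C) (f : ℕ → C) : ℕ → C :=
  fun n => if h : n < l.length then l.get ⟨n, h⟩ else f (n - l.length)

/-- The finite trace `t_k · R(j_k)` associated to a premise and a chosen finite trace. -/
def finPart (p : Judg C × List C) : List C := p.2 ++ [p.1.res]

/-- The rule instances of the trace semantics `𝓡^tr`: a conclusion `c ⇒ t`
together with its list of premises. -/
inductive TrRule (S : BigStep C) : C → Trace C → List (C × Trace C) → Prop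
  | ax {r : C} : r ∈ S.R → TrRule S r (.fin [r]) []
  | intro {ρ : Rule C} {ts : List (List C)} :
      ρ ∈ S.Rules → ts.length = ρ.premises.length →
      TrRule S ρ.concl
        (.fin (ρ.concl :: ((ρ.premises.zip ts).map finPart).flatten))
        ((ρ.premises.zip ts).map (fun p => (p.1.conf, Trace.fin (finPart p))))
  | div {ρ : Rule C} {pre rest : List (Judg C)} {j : Judg C} {ts : List (List C)} {f : ℕ → C} :
      ρ ∈ S.Rules → ρ.premises = pre ++ j :: rest →
      ts.length = pre.length →
      TrRule S ρ.concl
        (.inf (appendInf (ρ.concl :: ((pre.zip ts).map finPart).flatten) f))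
        (((pre.zip ts).map (fun p => (p.1.conf, Trace.fin (finPart p)))) ++
          [(j.conf, Trace.inf f)])

/-- `⊢_{𝓡^tr} c ⇒ t` by a finite derivation (inductive interpretation of `𝓡^tr`). -/
inductive TrDerivesFin (S : BigStep C) : C → Trace C → Prop
  | step {c : C} {t : Trace C} {prems : List (C × Trace C)} :
      TrRule S c t prems →
      (∀ p ∈ prems, TrDerivesFin S p.1 p.2) →
      TrDerivesFin S c t

/-- `⊢_{𝓡^tr} c ⇒ t`: coinductive interpretation of `𝓡^tr`, i.e. existence of a possibly
infinite proof tree, expressed as membership in some backward-closed (consistent) relation. -/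
def TrDerives (S : BigStep C) (c : C) (t : Trace C) : Prop :=
  ∃ X : C → Trace C → Prop,
    (∀ c' t', X c' t' → ∃ prems, TrRule S c' t' prems ∧ ∀ p ∈ prems, X p.1 p.2) ∧
    X c t

/-! ## Wrong -/

/-- There is a rule with conclusion configuration `c`, first premises `pre`, whose next
premise has configuration `c'` and result `r` (i.e. a rule `ρ' ∼ᵢ ρ` with `R(ρ', i) = r`). -/
def HasContinuation (S : BigStep C) (c : C) (pre : List (Judg C)) (c' r : C) : Prop :=
  ∃ ρ' ∈ S.Rules, ∃ j' : Judg C, ∃ rest' : List (Judg C),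
    ρ'.premises = pre ++ j' :: rest' ∧ ρ'.concl = c ∧ j'.conf = c' ∧ j'.res = r

/-- Derivability in the wrong semantics `𝓡^wr`; `none` plays the role of `wrong`. -/
inductive DerivesW (S : BigStep C) : C → Option C → Prop
  | ax {r : C} : r ∈ S.R → DerivesW S r (some r)
  | rule {ρ : Rule C} : ρ ∈ S.Rules →
      (∀ j ∈ ρ.premises, DerivesW S j.conf (some j.res)) →
      DerivesW S ρ.concl (some ρ.lastJ.res)
  | wrong_intro {ρ : Rule C} {pre rest : List (Judg C)} {j : Judg C} {r : C} :
      ρ ∈ S.Rules → ρ.premises = pre ++ j :: rest → r ∈ S.R →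
      ¬ HasContinuation S ρ.concl pre j.conf r →
      (∀ j' ∈ pre, DerivesW S j'.conf (some j'.res)) →
      DerivesW S j.conf (some r) →
      DerivesW S ρ.concl none
  | wrong_ax {c : C} : c ∉ S.R → (¬ ∃ ρ ∈ S.Rules, ρ.concl = c) →
      DerivesW S c none
  | wrong_prop {ρ : Rule C} {pre rest : List (Judg C)} {j : Judg C} :
      ρ ∈ S.Rules → ρ.premises = pre ++ j :: rest →
      (∀ j' ∈ pre, DerivesW S j'.conf (some j'.res)) →
      DerivesW S j.conf none →
      DerivesW S ρ.concl none

/-! ## Indexed predicates and soundness conditions -/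

variable {I : Type u}

/-- `c ∈ Π`, i.e. `c ∈ Π_ι` for some index `ι`. -/
def InPred (P : I → Set C) (c : C) : Prop := ∃ i : I, c ∈ P i

/-- Condition S1 (local preservation). -/
def LocalPres (S : BigStep C) (P : I → Set C) : Prop :=
  ∀ ρ ∈ S.Rules, ∀ i : I, ρ.concl ∈ P i →
    ∃ f : ℕ → I, f (ρ.premises.length - 1) = i ∧
      ∀ (k : ℕ) (hk : k < ρ.premises.length),
        (∀ (h : ℕ) (hh : h < k), (ρ.premises.get ⟨h, hh.trans hk⟩).res ∈ P (f h)) →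
        (ρ.premises.get ⟨k, hk⟩).conf ∈ P (f k)

/-- Condition S2 (∃-progress). -/
def ExProgress (S : BigStep C) (P : I → Set C) : Prop :=
  ∀ c : C, InPred P c → c ∉ S.R → ∃ ρ ∈ S.Rules, ρ.concl = c

/-- Condition S3 (∀-progress). -/
def AllProgress (S : BigStep C) (P : I → Set C) : Prop :=
  ∀ ρ ∈ S.Rules, InPred P ρ.concl →
    ∀ (pre : List (Judg C)) (j : Judg C) (rest : List (Judg C)),
      ρ.premises = pre ++ j :: rest →
      (∀ j' ∈ pre, Derives S j'.conf j'.res) →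
      ∀ r ∈ S.R, Derives S j.conf r →
      HasContinuation S ρ.concl pre j.conf r

/-- Condition S4 (progress-may). -/
def ProgressMay (S : BigStep C) (P : I → Set C) : Prop :=
  ∀ c : C, InPred P c → c ∉ S.R →
    ∃ ρ ∈ S.Rules, ρ.concl = c ∧
      ∀ (pre : List (Judg C)) (j : Judg C) (rest : List (Judg C)),
        ρ.premises = pre ++ j :: rest →
        (∀ j' ∈ pre, Derives S j'.conf j'.res) →
        ¬ Derives S j.conf j.res →
        ¬ ∃ r : C, Derives S j.conf r

/-! ## Partial evaluation: the inference system `𝓡^?` -/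

/-- The rule instances of the partial-evaluation semantics `𝓡^?`; `none` plays the role
of the unknown result `?`. -/
inductive URule (S : BigStep C) : C → Option C → List (C × Option C) → Prop
  | ax {r : C} : r ∈ S.R → URule S r (some r) []
  | rule {ρ : Rule C} : ρ ∈ S.Rules →
      URule S ρ.concl (some ρ.lastJ.res) (ρ.premises.map (fun j => (j.conf, some j.res)))
  | unk_ax {c : C} : URule S c none []
  | unk {ρ : Rule C} {pre rest : List (Judg C)} {j : Judg C} {r : C} :
      ρ ∈ S.Rules → ρ.premises = pre ++ j :: rest → r ∈ S.R →
      URule S ρ.concl none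
        (pre.map (fun j' => (j'.conf, some j'.res)) ++ [(j.conf, some r)])
  | prop {ρ : Rule C} {pre rest : List (Judg C)} {j : Judg C} :
      ρ ∈ S.Rules → ρ.premises = pre ++ j :: rest →
      URule S ρ.concl none
        (pre.map (fun j' => (j'.conf, some j'.res)) ++ [(j.conf, none)])

/-! ## Possibly infinite trees as partial functions -/

/-- A (possibly infinite) tree labelled by judgments `c ⇒ u`, `u ∈ R ∪ {?}`, given as a
partial function on addresses (lists of positive naturals), with nonempty domain closed
under parents and left siblings. -/
structure PTree (C : Type u) where
  label : List ℕ+ → Option (C × Option C)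
  root_def : label [] ≠ none
  closed : ∀ (α : List ℕ+) (n : ℕ+), label (α ++ [n]) ≠ none → label α ≠ none
  siblings : ∀ (α : List ℕ+) (n k : ℕ+), k ≤ n →
    label (α ++ [n]) ≠ none → label (α ++ [k]) ≠ none

/-- `τ` is a proof tree in `𝓡^?`: at each node, the children are exactly the premises
of a rule of `𝓡^?` with the node's judgment as conclusion. -/
def PTree.IsProofTree (S : BigStep C) (τ : PTree C) : Prop :=
  ∀ (α : List ℕ+) (p : C × Option C), τ.label α = some p →
    ∃ prems : List (C × Option C), URule S p.1 p.2 prems ∧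
      ∀ n : ℕ+, τ.label (α ++ [n]) = prems[(n : ℕ) - 1]?

/-- The order `τ ⊑ τ'` on trees: larger domain, same configurations, and equal subtrees
at nodes whose result is already known (in `R`). -/
def PTree.LE (τ τ' : PTree C) : Prop :=
  ∀ (α : List ℕ+) (p : C × Option C), τ.label α = some p →
    ∃ p' : C × Option C, τ'.label α = some p' ∧ p.1 = p'.1 ∧
      (p.2 ≠ none → ∀ β : List ℕ+, τ.label (α ++ β) = τ'.label (α ++ β))

/-- A tree is finite if its domain is finite. -/
def PTree.Finite (τ : PTree C) : Prop := {α : List ℕ+ | τ.label α ≠ none}.Finite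

/-- A (typically infinite) proof tree is well-formed if at every level there is a node
labelled by an incomplete judgment, and subtrees rooted at complete judgments are finite. -/
def PTree.WellFormed (τ : PTree C) : Prop :=
  (∀ n : ℕ, ∃ (α : List ℕ+) (c : C), α.length = n ∧ τ.label α = some (c, none)) ∧
  (∀ (α : List ℕ+) (c r : C), τ.label α = some (c, some r) →
    {β : List ℕ+ | τ.label (α ++ β) ≠ none}.Finite)

/-! ## Finite proof trees and the reduction relation -/

/-- Finite trees labelled by judgments `c ⇒ u`, `u ∈ R ∪ {?}` (with `none` playing `?`). -/
inductive FTree (C : Type u) where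
  | node : C → Option C → List (FTree C) → FTree C

/-- The judgment at the root of a finite tree. -/
def FTree.judg : FTree C → C × Option C
  | .node c u _ => (c, u)

/-- `τ` is a finite proof tree in the partial-evaluation semantics `𝓡^?`. -/
inductive IsFPT (S : BigStep C) : FTree C → Prop
  | mk {c : C} {u : Option C} {l : List (FTree C)} :
      URule S c u (l.map FTree.judg) →
      (∀ τ ∈ l, IsFPT S τ) →
      IsFPT S (.node c u l)

/-- A finite proof tree is complete if all its judgments have results in `R`. -/
inductive FTree.Complete (S : BigStep C) : FTree C → Prop
  | mk {c : C} {r : C} {l : List (FTree C)} :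
      r ∈ S.R →
      (∀ τ ∈ l, FTree.Complete S τ) →
      FTree.Complete S (.node c (some r) l)

/-- The order `τ ⊑ τ'` on finite trees. -/
inductive FTreeLE : FTree C → FTree C → Prop
  | done {c r : C} {l : List (FTree C)} :
      FTreeLE (.node c (some r) l) (.node c (some r) l)
  | step {c : C} {u' : Option C} {l l₁ l₂ : List (FTree C)} :
      l.length = l₁.length →
      (∀ p ∈ l.zip l₁, FTreeLE p.1 p.2) →
      FTreeLE (.node c none l) (.node c u' (l₁ ++ l₂))

/-- The one-step reduction relation `⇝` on finite proof trees in `𝓡^?`. -/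
inductive Red (S : BigStep C) : FTree C → FTree C → Prop
  /-- The axiom `r ⇒ ?` (with `r ∈ R`) steps to the axiom `r ⇒ r`. -/
  | res {r : C} : r ∈ S.R → Red S (.node r none []) (.node r (some r) [])
  /-- The axiom `c ⇒ ?` steps, for a rule `ρ` with conclusion configuration `c`,
  to the tree applying `prop(ρ,1,?)` to the leaf `c' ⇒ ?`, `c'` the first premise
  configuration of `ρ`. -/
  | start {ρ : Rule C} {j : Judg C} {rest : List (Judg C)} :
      ρ ∈ S.Rules → ρ.premises = j :: rest →
      Red S (.node ρ.concl none []) (.node ρ.concl none [.node j.conf none []])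
  /-- A tree with root `c ⇒ ?` whose children are the first `i` premises of some
  `ρ' ∈ 𝓡` (with `#ρ' = i`, last premise result `r`) steps to the same tree with
  root `c ⇒ r`. -/
  | complete {ρ' : Rule C} {pre : List (Judg C)} {j' : Judg C} {l : List (FTree C)} :
      ρ' ∈ S.Rules → ρ'.premises = pre ++ [j'] →
      l.map FTree.judg = pre.map (fun j => (j.conf, some j.res)) ++ [(j'.conf, some j'.res)] →
      Red S (.node ρ'.concl none l) (.node ρ'.concl (some j'.res) l)
  /-- A tree with root `c ⇒ ?` whose children are the first `i` premises of some
  `ρ' ∈ 𝓡` having an `(i+1)`-th premise steps by adding the leaf for that premise's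
  configuration. -/
  | next {ρ' : Rule C} {pre rest : List (Judg C)} {j' j'' : Judg C} {l : List (FTree C)} :
      ρ' ∈ S.Rules → ρ'.premises = pre ++ j' :: j'' :: rest →
      l.map FTree.judg = pre.map (fun j => (j.conf, some j.res)) ++ [(j'.conf, some j'.res)] →
      Red S (.node ρ'.concl none l) (.node ρ'.concl none (l ++ [.node j''.conf none []]))
  /-- Propagation: a step of the last child is propagated. -/
  | inner {c : C} {l : List (FTree C)} {τ τ' : FTree C} :
      Red S τ τ' →
      Red S (.node c none (l ++ [τ])) (.node c none (l ++ [τ']))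

/-
Along a `⊑`-chain every label stabilizes: configurations never change, and once a node carries
a result its whole subtree is frozen. The pointwise limit is therefore the least upper bound,
so it is `τ`. By BP a node has boundedly many children, so a node together with all its
children is already present at some finite stage; hence the limit is a proof tree, and its
complete subtrees are frozen copies of subtrees of finite trees. The limit is infinite, since a
finite limit would be reached at a finite stage, against strict monotonicity. Finally, a
finitely branching infinite tree whose complete subtrees are finite has an incomplete node at
every depth.
-/

theorem URule.length_le {S : BigStep C} {b : ℕ}
    (hb : ∀ ρ ∈ S.Rules, ρ.premises.length ≤ b)
    {c : C} {u : Option C} {prems : List (C × Option C)} (h : URule S c u prems) :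
    prems.length ≤ b := by
  cases h with
  | ax _ | unk_ax => simp
  | rule hρ => simpa using hb _ hρ
  | unk hρ hpre _ | prop hρ hpre =>
    have := hb _ hρ
    simp only [hpre, List.length_append, List.length_cons, List.length_map,
      List.length_nil] at this ⊢
    omega

namespace PTree

theorem label_injective :
    Function.Injective (label : PTree C → List ℕ+ → Option (C × Option C)) := by
  rintro ⟨⟩ ⟨⟩ rfl
  rfl

theorem label_ne_none_of_append (τ : PTree C) (α β : List ℕ+)
    (h : τ.label (α ++ β) ≠ none) :
    τ.label α ≠ none := by
  induction β using List.reverseRecOn with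
  | nil => simpa using h
  | append_singleton β k ih => exact ih (τ.closed _ k (by simpa using h))

theorem LE.subtree_eq {τ τ' : PTree C} (h : τ.LE τ') {α : List ℕ+} {p : C × Option C}
    (hp : τ.label α = some p) (hk : p.2 ≠ none) (β : List ℕ+) :
    τ'.label (α ++ β) = τ.label (α ++ β) := by
  obtain ⟨-, -, -, hfr⟩ := h α p hp
  exact (hfr hk β).symm

theorem LE.label_eq {τ τ' : PTree C} (h : τ.LE τ') {α : List ℕ+} {p : C × Option C}
    (hp : τ.label α = some p) (hk : p.2 ≠ none) : τ'.label α = some p := by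
  simpa [hp] using h.subtree_eq hp hk []

theorem LE.label_ne_none {τ τ' : PTree C} (h : τ.LE τ') {α : List ℕ+}
    (hα : τ.label α ≠ none) : τ'.label α ≠ none := by
  obtain ⟨p, hp⟩ := Option.ne_none_iff_exists'.mp hα
  obtain ⟨p', hp', -⟩ := h α p hp
  simp [hp']

instance : PartialOrder (PTree C) where
  le := PTree.LE
  le_refl _ _ p hp := ⟨p, hp, rfl, fun _ _ => rfl⟩
  le_trans τ₁ τ₂ τ₃ h₁₂ h₂₃ α p hp := by
    obtain ⟨q, hq, hpq, -⟩ := h₁₂ α p hp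
    obtain ⟨w, hw, hqw, -⟩ := h₂₃ α q hq
    refine ⟨w, hw, hpq.trans hqw, fun hk β => ?_⟩
    have hq' : q = p := Option.some.inj (hq.symm.trans (h₁₂.label_eq hp hk))
    subst hq'
    exact ((h₂₃.subtree_eq hq hk β).trans (h₁₂.subtree_eq hp hk β)).symm
  le_antisymm τ τ' h h' := by
    refine label_injective (funext fun α => ?_)
    rcases hα : τ.label α with _ | p
    · by_contra hα'
      exact h'.label_ne_none (Ne.symm hα') hα
    obtain ⟨p', hp', hc, -⟩ := h α p hα
    by_cases hk : p.2 = none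
    · by_cases hk' : p'.2 = none
      · rw [hp', Prod.ext hc (hk.trans hk'.symm)]
      · rw [hp', ← h'.label_eq hp' hk', hα]
    · exact (h.label_eq hα hk).symm

def BoundedBranching (τ : PTree C) (b : ℕ) : Prop :=
  ∀ (α : List ℕ+) (k : ℕ+), τ.label (α ++ [k]) ≠ none → (k : ℕ) ≤ b

theorem IsProofTree.boundedBranching {S : BigStep C} {b : ℕ} {τ : PTree C}
    (hb : ∀ ρ ∈ S.Rules, ρ.premises.length ≤ b) (h : τ.IsProofTree S) :
    τ.BoundedBranching b := by
  intro α k hk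
  obtain ⟨p, hp⟩ := Option.ne_none_iff_exists'.mp (τ.closed α k hk)
  obtain ⟨prems, hr, hch⟩ := h α p hp
  rw [hch, ne_eq, List.getElem?_eq_none_iff, not_le] at hk
  have := hr.length_le hb
  omega

theorem BoundedBranching.le_of_mem {τ : PTree C} {b : ℕ} (hb : τ.BoundedBranching b)
    {α : List ℕ+} (hα : τ.label α ≠ none) {k : ℕ+} (hk : k ∈ α) : (k : ℕ) ≤ b := by
  obtain ⟨s, t, rfl⟩ := List.append_of_mem hk
  exact hb s k (τ.label_ne_none_of_append _ t (by simpa using hα))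

theorem BoundedBranching.finite_length_le {τ : PTree C} {b : ℕ} (hb : τ.BoundedBranching b)
    (n : ℕ) : {α : List ℕ+ | τ.label α ≠ none ∧ α.length ≤ n}.Finite := by
  let K : Set ℕ+ := {k | (k : ℕ) ≤ b}
  have : _root_.Finite K := ((Set.finite_Iic b).preimage PNat.coe_injective.injOn).to_subtype
  refine ((List.finite_length_le K n).image (List.map Subtype.val)).subset ?_
  rintro α ⟨hα, hlen⟩
  lift α to List K using fun k hk => hb.le_of_mem hα hk
  exact ⟨α, by simpa using hlen, rfl⟩

/- If every node at level `n` were complete, the tree would consist of the finitely many nodes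
of depth at most `n` and the finite subtrees hanging from level `n`. -/
theorem exists_unknown_of_not_finite {τ : PTree C} {b : ℕ} (hb : τ.BoundedBranching b)
    (hsub : ∀ (α : List ℕ+) (c r : C), τ.label α = some (c, some r) →
      {β : List ℕ+ | τ.label (α ++ β) ≠ none}.Finite)
    (hτ : ¬ τ.Finite) (n : ℕ) :
    ∃ (α : List ℕ+) (c : C), α.length = n ∧ τ.label α = some (c, none) := by
  by_contra! hknown
  have hlevel : {α : List ℕ+ | τ.label α ≠ none ∧ α.length = n}.Finite :=
    (hb.finite_length_le n).subset fun α hα => ⟨hα.1, hα.2.le⟩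
  have hdeep : ∀ α ∈ {α : List ℕ+ | τ.label α ≠ none ∧ α.length = n},
      ((α ++ ·) '' {β | τ.label (α ++ β) ≠ none}).Finite := by
    rintro α ⟨hα, hlen⟩
    obtain ⟨⟨c, _ | r⟩, hcu⟩ := Option.ne_none_iff_exists'.mp hα
    · exact absurd hcu (hknown α c hlen)
    · exact (hsub α c r hcu).image _
  refine hτ (((hb.finite_length_le n).union (hlevel.biUnion hdeep)).subset fun γ hγ => ?_)
  by_cases hlen : γ.length ≤ n
  · exact Or.inl ⟨hγ, hlen⟩
  refine Or.inr (Set.mem_biUnion (x := γ.take n) ⟨?_, ?_⟩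
    ⟨γ.drop n, ?_, γ.take_append_drop n⟩)
  · exact τ.label_ne_none_of_append _ (γ.drop n) (by rwa [γ.take_append_drop n])
  · simp only [List.length_take]; omega
  · simpa using hγ

end PTree

section Chain

open Filter

variable {τs : ℕ → PTree C}

theorem exists_label_stable (hm : Monotone τs) (α : List ℕ+) :
    ∃ N, ∀ m ≥ N, (τs m).label α = (τs N).label α := by
  by_cases hk : ∃ n p, (τs n).label α = some p ∧ p.2 ≠ none
  · obtain ⟨n, p, hp, hk⟩ := hk
    exact ⟨n, fun m hnm => ((hm hnm).label_eq hp hk).trans hp.symm⟩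
  push Not at hk
  by_cases hd : ∃ n p, (τs n).label α = some p
  · obtain ⟨n, p, hp⟩ := hd
    refine ⟨n, fun m hnm => ?_⟩
    obtain ⟨q, hq, hc, -⟩ := hm hnm α p hp
    rw [hq, hp, Prod.ext hc.symm ((hk m q hq).trans (hk n p hp).symm)]
  · push Not at hd
    exact ⟨0, fun m _ => (Option.eq_none_iff_forall_ne_some.2 (hd m)).trans
      (Option.eq_none_iff_forall_ne_some.2 (hd 0)).symm⟩

noncomputable def limLabel (hm : Monotone τs) (α : List ℕ+) : Option (C × Option C) :=
  (τs (exists_label_stable hm α).choose).label α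

theorem eventually_label_eq_limLabel (hm : Monotone τs) (α : List ℕ+) :
    ∀ᶠ m in atTop, (τs m).label α = limLabel hm α :=
  eventually_atTop.2 ⟨_, (exists_label_stable hm α).choose_spec⟩

noncomputable def chainLim (hm : Monotone τs) : PTree C where
  label := limLabel hm
  root_def := by
    obtain ⟨m, hm'⟩ := (eventually_label_eq_limLabel hm []).exists
    exact hm' ▸ (τs m).root_def
  closed α k h := by
    obtain ⟨m, hα, hk⟩ := ((eventually_label_eq_limLabel hm α).and
      (eventually_label_eq_limLabel hm (α ++ [k]))).exists
    exact hα ▸ (τs m).closed α k (hk ▸ h)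
  siblings α n k hkn h := by
    obtain ⟨m, hk, hn⟩ := ((eventually_label_eq_limLabel hm (α ++ [k])).and
      (eventually_label_eq_limLabel hm (α ++ [n]))).exists
    exact hk ▸ (τs m).siblings α n k hkn (hn ▸ h)

theorem eventually_label_eq_chainLim (hm : Monotone τs) (α : List ℕ+) :
    ∀ᶠ m in atTop, (τs m).label α = (chainLim hm).label α :=
  eventually_label_eq_limLabel hm α

theorem le_chainLim (hm : Monotone τs) (n : ℕ) : τs n ≤ chainLim hm := by
  intro α p hp
  obtain ⟨m, hα, hnm⟩ :=
    ((eventually_label_eq_chainLim hm α).and (eventually_ge_atTop n)).exists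
  obtain ⟨q, hq, hc, -⟩ := hm hnm α p hp
  refine ⟨q, hα ▸ hq, hc, fun hk β => ?_⟩
  obtain ⟨m', hαβ, hnm'⟩ :=
    ((eventually_label_eq_chainLim hm (α ++ β)).and (eventually_ge_atTop n)).exists
  rw [← hαβ, (hm hnm').subtree_eq hp hk β]

theorem isLUB_chainLim (hm : Monotone τs) : IsLUB (Set.range τs) (chainLim hm) := by
  refine ⟨Set.forall_mem_range.2 (le_chainLim hm), fun σ hσ α q hq => ?_⟩
  obtain ⟨m, hmq⟩ := (eventually_label_eq_chainLim hm α).exists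
  have hmσ : τs m ≤ σ := hσ ⟨m, rfl⟩
  rw [← hmq] at hq
  obtain ⟨p', hp', hc, -⟩ := hmσ α q hq
  exact ⟨p', hp', hc, fun hk β =>
    ((le_chainLim hm m).subtree_eq hq hk β).trans (hmσ.subtree_eq hq hk β).symm⟩

theorem not_finite_chainLim (hs : StrictMono τs) : ¬ (chainLim hs.monotone).Finite := by
  intro hfin
  have hconst : ∀ᶠ m in atTop, τs m = chainLim hs.monotone := by
    filter_upwards [(eventually_all_finite hfin).2 fun α _ =>
      eventually_label_eq_chainLim hs.monotone α] with m hm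
    refine PTree.label_injective (funext fun α => ?_)
    by_cases hα : (chainLim hs.monotone).label α = none
    · rw [hα]
      by_contra hm'
      exact (le_chainLim hs.monotone m).label_ne_none hm' hα
    · exact hm α hα
  obtain ⟨N, hN⟩ := eventually_atTop.1 hconst
  exact N.succ_ne_self (hs.injective ((hN (N + 1) (by omega)).trans (hN N le_rfl).symm))

theorem boundedBranching_chainLim (hm : Monotone τs) {b : ℕ}
    (hb : ∀ n, (τs n).BoundedBranching b) : (chainLim hm).BoundedBranching b := by
  intro α k hk
  obtain ⟨m, hm'⟩ := (eventually_label_eq_chainLim hm (α ++ [k])).exists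
  exact hb m α k (hm' ▸ hk)

theorem eventually_children_eq_chainLim (hm : Monotone τs) {b : ℕ}
    (hb : ∀ n, (τs n).BoundedBranching b) (α : List ℕ+) :
    ∀ᶠ m in atTop, ∀ k : ℕ+,
      (τs m).label (α ++ [k]) = (chainLim hm).label (α ++ [k]) := by
  have hK : {k : ℕ+ | (k : ℕ) ≤ b}.Finite :=
    (Set.finite_Iic b).preimage PNat.coe_injective.injOn
  filter_upwards [(eventually_all_finite hK).2 fun k _ =>
    eventually_label_eq_chainLim hm (α ++ [k])] with m hm' k
  by_cases hk : (k : ℕ) ≤ b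
  · exact hm' k hk
  · rw [not_ne_iff.1 (mt (hb m α k) hk),
      not_ne_iff.1 (mt (boundedBranching_chainLim hm hb α k) hk)]

theorem isProofTree_chainLim {S : BigStep C} (hBP : S.BP) (hm : Monotone τs)
    (hpt : ∀ n, (τs n).IsProofTree S) : (chainLim hm).IsProofTree S := by
  obtain ⟨b, hb⟩ := hBP
  intro α p hp
  obtain ⟨m, hα, hchildren⟩ := ((eventually_label_eq_chainLim hm α).and
    (eventually_children_eq_chainLim hm (fun n => (hpt n).boundedBranching hb) α)).exists
  obtain ⟨prems, hr, hprems⟩ := hpt m α p (hα.trans hp)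
  exact ⟨prems, hr, fun k => (hchildren k).symm.trans (hprems k)⟩

theorem finite_subtree_chainLim (hm : Monotone τs) (hfin : ∀ n, (τs n).Finite)
    (α : List ℕ+) (c r : C) (hα : (chainLim hm).label α = some (c, some r)) :
    {β : List ℕ+ | (chainLim hm).label (α ++ β) ≠ none}.Finite := by
  obtain ⟨m, hm'⟩ := (eventually_label_eq_chainLim hm α).exists
  rw [← hm'] at hα
  refine ((hfin m).preimage (List.append_right_injective α).injOn).subset fun β hβ => ?_
  rwa [Set.mem_preimage, Set.mem_ofPred_eq,
    ← (le_chainLim hm m).subtree_eq hα (Option.some_ne_none r) β]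

end Chain

/-- Proposition `pt-seq` (2): for each strictly `⊑`-increasing
sequence of finite proof trees in `𝓡^?`, the least upper bound is an infinite,
well-formed proof tree. -/
theorem statement14 {C : Type u} (S : BigStep C) (hBP : S.BP) (τs : ℕ → PTree C)
    (hpt : ∀ n : ℕ, (τs n).Finite ∧ (τs n).IsProofTree S)
    (hmono : ∀ n : ℕ, PTree.LE (τs n) (τs (n + 1)) ∧ τs n ≠ τs (n + 1))
    (τ : PTree C)
    (hub : ∀ n : ℕ, PTree.LE (τs n) τ)
    (hlub : ∀ τ' : PTree C, (∀ n : ℕ, PTree.LE (τs n) τ') → PTree.LE τ τ') :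
    ¬ τ.Finite ∧ τ.WellFormed ∧ τ.IsProofTree S := by
  have hs : StrictMono τs :=
    strictMono_nat_of_lt_succ fun n => lt_of_le_of_ne (hmono n).1 (hmono n).2
  obtain rfl : τ = chainLim hs.monotone :=
    IsLUB.unique ⟨Set.forall_mem_range.2 hub, fun σ hσ => hlub σ fun n => hσ ⟨n, rfl⟩⟩
      (isLUB_chainLim hs.monotone)
  have hPT := isProofTree_chainLim hBP hs.monotone fun n => (hpt n).2
  have hsub := finite_subtree_chainLim hs.monotone fun n => (hpt n).1
  obtain ⟨b, hb⟩ := hBP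
  have hunknown :=
    PTree.exists_unknown_of_not_finite (hPT.boundedBranching hb) hsub (not_finite_chainLim hs)
  exact ⟨not_finite_chainLim hs, ⟨hunknown, hsub⟩, hPT⟩

end BigStepMeta
end

section
/- Let (C, R, 𝓡) be a big-step semantics (satisfying the boundedness condition BP), 𝓡^tr its trace semantics, 𝓡^? its partial-evaluation semantics, and ⇝ the one-step reduction relation on finite proof trees in 𝓡^?. Then ⊢_{𝓡^tr} c ⇒ t holds for some infinite trace t ∈ C^ω if and only if there is an infinite ⇝-reduction sequence starting from the single-node tree with root c ⇒ ?. -/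
/-!
Both sides are equivalent to divergence in the big-step sense: an infinite chain
`c = c₀, c₁, …` in which `cₖ₊₁` is the configuration of a premise of some rule for `cₖ`
whose earlier premises are derivable.

A coinductive trace derivation of an infinite trace must use a divergence-propagation rule
at its root, and its finite-trace premises are ordinary derivations (by induction on the
length of the trace); this gives the chain. Conversely, the chain together with finite traces
for the derivable premises is read off as one infinite trace.

Along an infinite `⇝`-sequence from `c ⇒ ?` every tree is a partial derivation, and the
number of children of the root never decreases; by BP it is eventually constant, after which
only the last child is reduced, infinitely often: it is the next configuration of the chain.
Conversely, following the chain, each derivable premise is completed by finitely many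
reduction steps before a leaf for the next premise is opened.
-/

namespace BigStepMeta

universe u

variable {C : Type u}

/-! ## Indexed predicates and soundness conditions -/

variable {I : Type u}

section

open Relation

variable {S : BigStep C}

theorem not_acc_of_forall_exists {α : Sort*} {r : α → α → Prop} (P : α → Prop)
    (h : ∀ a, P a → ∃ b, P b ∧ r b a) {a : α} (ha : P a) : ¬Acc r a := by
  intro hacc
  induction hacc with
  | intro a _ ih =>
    obtain ⟨b, hb, hba⟩ := h a ha
    exact ih b hba hb

theorem _root_.List.exists_forall₂_of_forall_exists {α β : Type*} {R : α → β → Prop} :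
    ∀ {l : List α}, (∀ a ∈ l, ∃ b, R a b) → ∃ l' : List β, List.Forall₂ R l l'
  | [], _ => ⟨[], .nil⟩
  | a :: l, h => by
    obtain ⟨b, hb⟩ := h a List.mem_cons_self
    obtain ⟨l', hl'⟩ := List.exists_forall₂_of_forall_exists fun x hx =>
      h x (List.mem_cons_of_mem _ hx)
    exact ⟨b :: l', .cons hb hl'⟩

theorem _root_.List.forall_mem_of_forall_mem_zip {α β : Type*} {P : α → Prop} {l₁ : List α}
    {l₂ : List β} (hlen : l₁.length ≤ l₂.length) (h : ∀ p ∈ l₁.zip l₂, P p.1) :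
    ∀ a ∈ l₁, P a := by
  intro a ha
  rw [← List.map_fst_zip hlen] at ha
  obtain ⟨p, hp, rfl⟩ := List.mem_map.1 ha
  exact h p hp

theorem _root_.Nat.exists_forall_ge_eq_of_monotone {k : ℕ → ℕ} (hk : Monotone k) {b : ℕ}
    (hb : ∀ n, k n ≤ b) : ∃ N, ∀ n ≥ N, k n = k N := by
  have hbdd : BddAbove (Set.range k) := ⟨b, by rintro _ ⟨n, rfl⟩; exact hb n⟩
  obtain ⟨N, hN⟩ := Nat.sSup_mem (Set.range_nonempty k) hbdd
  exact ⟨N, fun n hn => le_antisymm (hN ▸ le_csSup hbdd ⟨n, rfl⟩) (hk hn)⟩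

theorem Rule.lastJ_eq_of_premises_eq {ρ : Rule C} {pre : List (Judg C)} {j : Judg C}
    (h : ρ.premises = pre ++ [j]) : ρ.lastJ = j := by
  unfold Rule.lastJ
  simp_rw [h]
  exact List.getLast_concat

theorem Rule.exists_trace_eq_append_lastJ_res (ρ : Rule C) {ts : List (List C)}
    (hlen : ts.length = ρ.premises.length) :
    ∃ l, ρ.concl :: ((ρ.premises.zip ts).map finPart).flatten = l ++ [ρ.lastJ.res] := by
  obtain ⟨pre, j, hpre⟩ := (List.eq_nil_or_concat ρ.premises).resolve_left ρ.ne
  rw [List.concat_eq_append] at hpre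
  obtain ⟨ts', t, rfl⟩ := (List.eq_nil_or_concat ts).resolve_left fun h => by simp_all
  have hlen' : pre.length = ts'.length := by simpa [hpre] using hlen.symm
  refine ⟨ρ.concl :: ((pre.zip ts').map finPart).flatten ++ t, ?_⟩
  rw [Rule.lastJ_eq_of_premises_eq hpre, hpre, List.concat_eq_append, List.zip_append hlen']
  simp [finPart]

def DivStep (S : BigStep C) (a b : C) : Prop :=
  ∃ ρ ∈ S.Rules, ∃ pre j rest, ρ.premises = pre ++ j :: rest ∧ ρ.concl = a ∧ j.conf = b ∧
    ∀ j' ∈ pre, Derives S j'.conf j'.res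

/-- By `not_acc_iff_exists_descending_chain`, `c` diverges iff it starts an infinite
`DivStep`-chain. -/
def Diverges (S : BigStep C) (c : C) : Prop := ¬Acc (flip (DivStep S)) c

theorem derives_of_consistent {X : C → Trace C → Prop}
    (hX : ∀ c t, X c t → ∃ prems, TrRule S c t prems ∧ ∀ p ∈ prems, X p.1 p.2)
    {c r : C} {l : List C} (h : X c (.fin (l ++ [r]))) : Derives S c r := by
  induction hn : l.length using Nat.strong_induction_on generalizing c r l with
  | _ n ih =>
    obtain ⟨prems, hrule, hprems⟩ := hX _ _ h
    generalize ht : Trace.fin (l ++ [r]) = t at hrule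
    cases hrule with
    | ax hr =>
      obtain ⟨-, rfl⟩ := List.append_singleton_inj.1 (Trace.fin.inj ht : l ++ [r] = [] ++ [_])
      exact .ax hr
    | @intro ρ ts hρ hlen =>
      obtain ⟨l₀, hl₀⟩ := ρ.exists_trace_eq_append_lastJ_res hlen
      have hl := Trace.fin.inj ht
      obtain rfl := (List.append_singleton_inj.1 (hl.trans hl₀)).2
      refine .rule hρ (List.forall_mem_of_forall_mem_zip hlen.ge fun p hp =>
        ih p.2.length ?_ (hprems _ (List.mem_map_of_mem hp)) rfl)
      have hsub := (List.sublist_flatten_of_mem (List.mem_map_of_mem (f := finPart) hp)).length_le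
      have hlen_l := congrArg List.length hl
      simp only [finPart, List.length_append, List.length_cons, List.length_nil] at hsub hlen_l
      omega
    | div => cases ht

theorem TrDerives.diverges {c : C} {f : ℕ → C} (h : TrDerives S c (.inf f)) : Diverges S c := by
  obtain ⟨X, hX, hc⟩ := h
  refine not_acc_of_forall_exists (fun a => ∃ f, X a (.inf f)) ?_ ⟨f, hc⟩
  rintro a ⟨f, ha⟩
  obtain ⟨prems, hrule, hprems⟩ := hX _ _ ha
  cases hrule with
  | @div ρ pre rest j ts f' hρ hprem hlen =>
    have hj : X j.conf (.inf f') := hprems _ (List.mem_append_right _ (List.mem_singleton_self _))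
    refine ⟨j.conf, ⟨f', hj⟩, ρ, hρ, pre, j, rest, hprem, rfl, rfl, ?_⟩
    exact List.forall_mem_of_forall_mem_zip hlen.ge fun p hp =>
      derives_of_consistent hX (hprems _ (List.mem_append_left _ (List.mem_map_of_mem hp)))

theorem Derives.exists_trDerivesFin {c r : C} (h : Derives S c r) :
    ∃ l, TrDerivesFin S c (.fin (l ++ [r])) := by
  induction h with
  | ax hr => exact ⟨[], .step (.ax hr) (by simp)⟩
  | @rule ρ hρ _ ih =>
    obtain ⟨ts, hts⟩ := List.exists_forall₂_of_forall_exists ih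
    obtain ⟨hlen, hts⟩ := List.forall₂_iff_zip.1 hts
    obtain ⟨l, hl⟩ := ρ.exists_trace_eq_append_lastJ_res hlen.symm
    exact ⟨l, hl ▸ .step (.intro hρ hlen.symm) (List.forall_mem_map.2 fun p hp => hts hp)⟩

/-- The stream `hd k :: tl k ++ hd (k + 1) :: tl (k + 1) ++ ⋯`. -/
def flattenStream (hd : ℕ → C) (tl : ℕ → List C) : ℕ → ℕ → C
  | k, 0 => hd k
  | k, n + 1 =>
    if h : n < (tl k).length then (tl k)[n] else flattenStream hd tl (k + 1) (n - (tl k).length)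
termination_by _ n => n

theorem flattenStream_eq_appendInf (hd : ℕ → C) (tl : ℕ → List C) (k : ℕ) :
    flattenStream hd tl k = appendInf (hd k :: tl k) (flattenStream hd tl (k + 1)) := by
  funext n
  cases n with
  | zero => simp [flattenStream, appendInf]
  | succ n =>
    rw [flattenStream, appendInf]
    by_cases h : n < (tl k).length <;> simp [h]

theorem Diverges.exists_trDerives {c : C} (h : Diverges S c) : ∃ f, TrDerives S c (.inf f) := by
  obtain ⟨cs, rfl, hcs⟩ := not_acc_iff_exists_descending_chain.1 h
  have hcs : ∀ n, DivStep S (cs n) (cs (n + 1)) := hcs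
  choose ρ hρ pre j rest hprem hconcl hconf hpre using hcs
  choose ts hts using fun k => List.exists_forall₂_of_forall_exists fun j' hj' =>
    (hpre k j' hj').exists_trDerivesFin
  set s := flattenStream cs fun k => (((pre k).zip (ts k)).map finPart).flatten
  refine ⟨s 0, fun a t => TrDerivesFin S a t ∨ ∃ k, a = cs k ∧ t = .inf (s k), ?_,
    .inr ⟨0, rfl, rfl⟩⟩
  rintro a t (⟨hrule, hprems⟩ | ⟨k, rfl, rfl⟩)
  · exact ⟨_, hrule, fun p hp => .inl (hprems p hp)⟩
  · obtain ⟨hlen, hzip⟩ := List.forall₂_iff_zip.1 (hts k)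
    have hrule := TrRule.div (f := s (k + 1)) (hρ k) (hprem k) hlen.symm
    have hs : s k = appendInf (cs k :: (((pre k).zip (ts k)).map finPart).flatten) (s (k + 1)) :=
      flattenStream_eq_appendInf _ _ k
    rw [hconcl k, ← hs] at hrule
    refine ⟨_, hrule, ?_⟩
    simp only [List.mem_append, List.mem_map, List.mem_singleton]
    rintro _ (⟨p, hp, rfl⟩ | rfl)
    · exact .inl (hzip hp)
    · exact .inr ⟨k + 1, hconf k, rfl⟩

def FTree.children : FTree C → List (FTree C)
  | .node _ _ l => l

theorem Red.exists_eq_node {τ τ' : FTree C} (h : Red S τ τ') : ∃ a l, τ = .node a none l := by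
  cases h <;> exact ⟨_, _, rfl⟩

theorem Red.judg_fst_eq {τ τ' : FTree C} (h : Red S τ τ') : τ'.judg.1 = τ.judg.1 := by
  cases h <;> rfl

theorem Red.inner_or_length_children_eq {τ τ' : FTree C} (h : Red S τ τ')
    (h' : τ'.judg.2 = none) :
    (∃ l σ σ', τ.children = l ++ [σ] ∧ τ'.children = l ++ [σ'] ∧ Red S σ σ') ∨
      τ'.children.length = τ.children.length + 1 := by
  cases h with
  | res | complete => simp [FTree.judg] at h'
  | start | next => simp [FTree.children]
  | inner hred => exact .inl ⟨_, _, _, rfl, rfl, hred⟩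

theorem exists_transGen_red_of_premises_prefix {ρ : Rule C} (hρ : ρ ∈ S.Rules)
    {pre rest : List (Judg C)} {j : Judg C} (hprem : ρ.premises = pre ++ j :: rest)
    (hpre : ∀ j' ∈ pre, ∃ τ : FTree C, τ.judg = (j'.conf, some j'.res) ∧
      ReflTransGen (Red S) (.node j'.conf none []) τ) :
    ∃ l : List (FTree C), l.map FTree.judg = pre.map (fun j' => (j'.conf, some j'.res)) ∧
      TransGen (Red S) (.node ρ.concl none [])
        (.node ρ.concl none (l ++ [.node j.conf none []])) := by
  induction pre using List.reverseRecOn generalizing j rest with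
  | nil => exact ⟨[], rfl, .single (.start hρ hprem)⟩
  | append_singleton pre d ih =>
    obtain ⟨l, hl, hpath⟩ := ih (j := d) (rest := j :: rest) (by simpa using hprem)
      fun j' hj' => hpre j' (List.mem_append_left _ hj')
    obtain ⟨τ, hτ, hτpath⟩ := hpre d (List.mem_append_right _ (List.mem_singleton_self _))
    have hl' : (l ++ [τ]).map FTree.judg = (pre ++ [d]).map (fun j' => (j'.conf, some j'.res)) := by
      simp [hl, hτ]
    refine ⟨l ++ [τ], hl', (hpath.trans_left (hτpath.lift _ fun _ _ => Red.inner)).tail ?_⟩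
    exact .next hρ (by simpa using hprem) (by simpa using hl')

theorem Derives.exists_reflTransGen_red {a r : C} (h : Derives S a r) :
    ∃ τ : FTree C, τ.judg = (a, some r) ∧ ReflTransGen (Red S) (.node a none []) τ := by
  induction h with
  | ax hr => exact ⟨_, rfl, .single (.res hr)⟩
  | @rule ρ hρ hall ih =>
    have hprem : ρ.premises = ρ.premises.dropLast ++ [ρ.lastJ] :=
      (List.dropLast_append_getLast ρ.ne).symm
    obtain ⟨l, hl, hpath⟩ := exists_transGen_red_of_premises_prefix hρ hprem
      fun j' hj' => ih j' (List.dropLast_subset _ hj')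
    obtain ⟨τ, hτ, hτpath⟩ := ih ρ.lastJ (List.getLast_mem ρ.ne)
    have hdone : Red S (.node ρ.concl none (l ++ [τ]))
        (.node ρ.concl (some ρ.lastJ.res) (l ++ [τ])) := .complete hρ hprem (by simp [hl, hτ])
    exact ⟨_, rfl,
      ((hpath.trans_left (hτpath.lift _ fun _ _ => Red.inner)).tail hdone).to_reflTransGen⟩

inductive SpineDiverges (S : BigStep C) : FTree C → Prop
  | leaf {c : C} : Diverges S c → SpineDiverges S (.node c none [])
  | inner {c : C} {l : List (FTree C)} {τ : FTree C} :
      SpineDiverges S τ → SpineDiverges S (.node c none (l ++ [τ]))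

theorem SpineDiverges.exists_transGen_red {τ : FTree C} (h : SpineDiverges S τ) :
    ∃ τ', TransGen (Red S) τ τ' ∧ SpineDiverges S τ' := by
  induction h with
  | leaf hc =>
    obtain ⟨c', hc', ρ, hρ, pre, j, rest, hprem, rfl, rfl, hpre⟩ := exists_not_acc_lt_of_not_acc hc
    obtain ⟨l, -, hpath⟩ := exists_transGen_red_of_premises_prefix hρ hprem
      fun j' hj' => (hpre j' hj').exists_reflTransGen_red
    exact ⟨_, hpath, .inner (.leaf hc')⟩
  | inner _ ih =>
    obtain ⟨τ', hpath, hτ'⟩ := ih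
    exact ⟨_, hpath.lift _ fun _ _ => Red.inner, .inner hτ'⟩

theorem Diverges.not_acc_red {c : C} (h : Diverges S c) :
    ¬Acc (flip (Red S)) (.node c none []) := fun hacc =>
  not_acc_of_forall_exists (r := TransGen (flip (Red S))) (SpineDiverges S)
    (fun _ hτ => (hτ.exists_transGen_red).imp fun _ ⟨hpath, hτ'⟩ => ⟨hτ', transGen_swap.2 hpath⟩)
    (.leaf h) hacc.transGen

inductive IsPartialDerivation (S : BigStep C) : FTree C → Prop
  | leaf (c : C) : IsPartialDerivation S (.node c none [])
  | complete {a r : C} {l : List (FTree C)} :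
      Derives S a r → IsPartialDerivation S (.node a (some r) l)
  | unfinished {ρ : Rule C} {pre rest : List (Judg C)} {j : Judg C} {l : List (FTree C)}
      {τ : FTree C} :
      ρ ∈ S.Rules → ρ.premises = pre ++ j :: rest →
      l.map FTree.judg = pre.map (fun j' => (j'.conf, some j'.res)) →
      (∀ j' ∈ pre, Derives S j'.conf j'.res) →
      IsPartialDerivation S τ → τ.judg.1 = j.conf →
      IsPartialDerivation S (.node ρ.concl none (l ++ [τ]))

namespace IsPartialDerivation

theorem derives {τ : FTree C} {a r : C} (h : IsPartialDerivation S τ)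
    (hτ : τ.judg = (a, some r)) : Derives S a r := by
  cases h with
  | complete hd =>
    simp only [FTree.judg, Prod.mk.injEq, Option.some.injEq] at hτ
    obtain ⟨rfl, rfl⟩ := hτ
    exact hd
  | _ => simp [FTree.judg] at hτ

theorem derives_of_map_judg {a : C} {l : List (FTree C)} {js : List (Judg C)}
    (h : IsPartialDerivation S (.node a none l))
    (hl : l.map FTree.judg = js.map (fun j => (j.conf, some j.res))) :
    ∀ j ∈ js, Derives S j.conf j.res := by
  intro j hj
  obtain ⟨σ, hσ, hσj⟩ := List.mem_map.1 (hl ▸ List.mem_map_of_mem hj)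
  cases h with
  | leaf => simp at hσ
  | unfinished _ _ hl' hpre hτ _ =>
    rcases List.mem_append.1 hσ with hσ | hσ
    · obtain ⟨j', hj', he⟩ := List.mem_map.1 (hl' ▸ List.mem_map_of_mem hσ)
      simp only [hσj, Prod.mk.injEq, Option.some.injEq] at he
      exact he.1 ▸ he.2 ▸ hpre j' hj'
    · rw [List.mem_singleton] at hσ
      subst hσ
      exact hτ.derives hσj

theorem of_node_append {a : C} {l : List (FTree C)} {τ : FTree C}
    (h : IsPartialDerivation S (.node a none (l ++ [τ]))) :
    ∃ ρ ∈ S.Rules, ∃ pre j rest, ρ.premises = pre ++ j :: rest ∧ ρ.concl = a ∧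
      l.map FTree.judg = pre.map (fun j' => (j'.conf, some j'.res)) ∧
      (∀ j' ∈ pre, Derives S j'.conf j'.res) ∧ IsPartialDerivation S τ ∧ τ.judg.1 = j.conf := by
  generalize hls : l ++ [τ] = ls at h
  cases h with
  | leaf => simp at hls
  | unfinished hρ hprem hl hpre hτ hτj =>
    obtain ⟨rfl, rfl⟩ := List.append_singleton_inj.1 hls
    exact ⟨_, hρ, _, _, _, hprem, rfl, hl, hpre, hτ, hτj⟩

theorem red {τ τ' : FTree C} (h : IsPartialDerivation S τ) (hred : Red S τ τ') :
    IsPartialDerivation S τ' := by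
  induction hred with
  | res hr => exact .complete (.ax hr)
  | start hρ hprem => exact .unfinished (pre := []) (l := []) hρ hprem rfl (by simp) (.leaf _) rfl
  | @complete ρ pre j l hρ hprem hl =>
    have hall := h.derives_of_map_judg (js := ρ.premises) (by simp [hl, hprem])
    exact ρ.lastJ_eq_of_premises_eq hprem ▸ .complete (.rule hρ hall)
  | @next ρ pre rest j j' l hρ hprem hl =>
    have hl' : l.map FTree.judg = (pre ++ [j]).map (fun j' => (j'.conf, some j'.res)) := by
      simp [hl]
    exact .unfinished (pre := pre ++ [j]) (rest := rest) hρ (by simp [hprem]) hl'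
      (h.derives_of_map_judg hl') (.leaf _) rfl
  | inner hred ih =>
    obtain ⟨ρ, hρ, pre, j, rest, hprem, rfl, hl, hpre, hτ, hτj⟩ := h.of_node_append
    exact .unfinished hρ hprem hl hpre (ih hτ) (hred.judg_fst_eq.trans hτj)

theorem length_le {b : ℕ} (hb : ∀ ρ ∈ S.Rules, ρ.premises.length ≤ b) {a : C}
    {l : List (FTree C)} (h : IsPartialDerivation S (.node a none l)) : l.length ≤ b := by
  cases h with
  | leaf => exact Nat.zero_le b
  | @unfinished ρ pre rest j l' τ hρ hprem hl =>
    have h1 := congrArg List.length hl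
    have h2 := congrArg List.length hprem
    have := hb ρ hρ
    simp only [List.length_map, List.length_append, List.length_cons, List.length_nil] at h1 h2 ⊢
    omega

end IsPartialDerivation

theorem exists_forall_ge_red_inner (hBP : S.BP) {τs : ℕ → FTree C}
    (hτs : ∀ n, Red S (τs n) (τs (n + 1))) (hpd : ∀ n, IsPartialDerivation S (τs n)) :
    ∃ N, ∀ n ≥ N, ∃ l σ σ',
      (τs n).children = l ++ [σ] ∧ (τs (n + 1)).children = l ++ [σ'] ∧ Red S σ σ' := by
  obtain ⟨b, hb⟩ := hBP
  have hunf : ∀ n, (τs (n + 1)).judg.2 = none := fun n => by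
    obtain ⟨a, l, he⟩ := (hτs (n + 1)).exists_eq_node
    simp [he, FTree.judg]
  have hmono : Monotone fun n => (τs n).children.length := monotone_nat_of_le_succ fun n => by
    rcases (hτs n).inner_or_length_children_eq (hunf n) with ⟨l, σ, σ', h1, h2, -⟩ | h <;>
      simp [*]
  have hbound : ∀ n, (τs n).children.length ≤ b := fun n => by
    obtain ⟨a, l, he⟩ := (hτs n).exists_eq_node
    exact he ▸ (he ▸ hpd n).length_le hb
  obtain ⟨N, hN⟩ := Nat.exists_forall_ge_eq_of_monotone hmono hbound
  refine ⟨N, fun n hn => ((hτs n).inner_or_length_children_eq (hunf n)).resolve_right fun h => ?_⟩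
  have := hN n hn
  have := hN (n + 1) (by omega)
  omega

theorem IsPartialDerivation.exists_divStep (hBP : S.BP) {τ : FTree C}
    (h : IsPartialDerivation S τ) (hτ : ¬Acc (flip (Red S)) τ) :
    ∃ σ, IsPartialDerivation S σ ∧ ¬Acc (flip (Red S)) σ ∧ DivStep S τ.judg.1 σ.judg.1 := by
  obtain ⟨τs, rfl, hτs⟩ := not_acc_iff_exists_descending_chain.1 hτ
  have hτs : ∀ n, Red S (τs n) (τs (n + 1)) := hτs
  have hpd : ∀ n, IsPartialDerivation S (τs n) := Nat.rec h fun n ih => ih.red (hτs n)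
  have hconf : ∀ n, (τs n).judg.1 = (τs 0).judg.1 :=
    Nat.rec rfl fun n ih => (hτs n).judg_fst_eq.trans ih
  obtain ⟨N, hN⟩ := exists_forall_ge_red_inner hBP hτs hpd
  let σs m := (τs (N + m)).children.getLastD (τs 0)
  have hσs : ∀ m, Red S (σs m) (σs (m + 1)) := fun m => by
    obtain ⟨l, σ, σ', h1, h2, hred⟩ := hN (N + m) (by omega)
    simpa [σs, h1, ← Nat.add_assoc, h2] using hred
  obtain ⟨a, ls, he⟩ := (hτs N).exists_eq_node
  obtain ⟨l, σ, -, hls, -⟩ := hN N le_rfl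
  rw [he, FTree.children] at hls
  subst hls
  obtain ⟨ρ, hρ, pre, j, rest, hprem, hconcl, -, hpre, hσ, hσj⟩ := (he ▸ hpd N).of_node_append
  have hσ0 : σs 0 = σ := by simp [σs, he, FTree.children]
  refine ⟨σ, hσ, not_acc_iff_exists_descending_chain.2 ⟨σs, hσ0, hσs⟩,
    ρ, hρ, pre, j, rest, hprem, ?_, hσj.symm, hpre⟩
  rw [hconcl, ← hconf N, he]
  rfl

theorem diverges_of_not_acc_red (hBP : S.BP) {c : C}
    (h : ¬Acc (flip (Red S)) (.node c none [])) : Diverges S c := by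
  refine not_acc_of_forall_exists
    (fun a => ∃ τ, IsPartialDerivation S τ ∧ ¬Acc (flip (Red S)) τ ∧ τ.judg.1 = a) ?_
    ⟨_, .leaf c, h, rfl⟩
  rintro _ ⟨τ, hτ, hinf, rfl⟩
  obtain ⟨σ, hσ, hσinf, hstep⟩ := hτ.exists_divStep hBP hinf
  exact ⟨_, ⟨σ, hσ, hσinf, rfl⟩, hstep⟩

end

/-- Theorem `eq-trace-unknown`: `⊢_{𝓡^tr} c ⇒ t` for some infinite
trace `t` iff there is an infinite `⇝`-reduction sequence from the single-node tree
with root `c ⇒ ?`. -/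
theorem statement17 {C : Type u} (S : BigStep C) (hBP : S.BP) (c : C) :
    (∃ f : ℕ → C, TrDerives S c (Trace.inf f)) ↔
      ∃ τs : ℕ → FTree C, τs 0 = FTree.node c none [] ∧
        ∀ n : ℕ, Red S (τs n) (τs (n + 1)) :=
  calc (∃ f : ℕ → C, TrDerives S c (Trace.inf f))
      ↔ Diverges S c := ⟨fun ⟨_, hf⟩ => hf.diverges, Diverges.exists_trDerives⟩
    _ ↔ ¬Acc (flip (Red S)) (.node c none []) :=
      ⟨Diverges.not_acc_red, diverges_of_not_acc_red hBP⟩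
    _ ↔ _ := not_acc_iff_exists_descending_chain

end BigStepMeta
end
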